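/- arXiv:2002.06687 — 4 statements merged into one kernel-verified Lean document; each statement's English description precedes it below -/
import Mathlib

section
/- Let R₀ be a Noetherian commutative ring, u ∈ R₀ an element contained in the Jacobson radical of R₀ (equivalently, in every maximal ideal of R₀), and N a finitely generated flat R₀-module. Let R₀[[T]] denote the power series ring and set M := R₀[[T]] ⊗_{R₀} N. Then u − T is a non-zero-divisor on M, and the quotient M/(u − T)M is a flat R₀-module. -/
/-!
Evaluation at `u` identifies `R₀⟦T⟧ ⧸ (u - T)` with the `u`-adic completion of `R₀`, which is
flat because `R₀` is Noetherian. Surjectivity comes from writing a `u`-adic Cauchy sequence as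
the partial sums of `∑ fₖ uᵏ`. For the kernel: if `u ^ n ∣ ∑_{k<n} fₖ uᵏ` for all `n`, then
`f ∈ (u - T) + (Tⁿ)` for all `n`, and ideals of the Noetherian ring `R₀⟦T⟧` are closed in the
`T`-adic topology by Krull's intersection theorem. Krull's theorem over `R₀` also shows that
`u - T` is regular on `R₀⟦T⟧`: a power series killed by it has coefficients divisible by every
power of `u`. Both properties pass to `R₀⟦T⟧ ⊗ N` because `N` is flat, using
`(R₀⟦T⟧ ⊗ N) ⧸ (u - T) ≅ (R₀⟦T⟧ ⧸ (u - T)) ⊗ N`.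
-/

open scoped TensorProduct

section Tensor

variable {R A : Type*} [CommRing R] [CommRing A] [Algebra R A]
  (N : Type*) [AddCommGroup N] [Module R N] [Module.Flat R N]

theorem IsSMulRegular.baseChange {a : A} (ha : IsSMulRegular A a) :
    IsSMulRegular (A ⊗[R] N) a :=
  ((TensorProduct.rid A (A ⊗[R] N)).isSMulRegular_congr a).mp (ha.lTensor (A ⊗[R] N))

theorem Module.Flat.tensorProduct_quotient_smul_top (I : Ideal A) [Module.Flat R (A ⧸ I)] :
    Module.Flat R ((A ⊗[R] N) ⧸ (I • ⊤ : Submodule A (A ⊗[R] N))) :=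
  .of_linearEquiv <| ((TensorProduct.quotTensorEquivQuotSMul (A ⊗[R] N) I).symm ≪≫ₗ
    TensorProduct.AlgebraTensorModule.cancelBaseChange R A A (A ⧸ I) N).restrictScalars R

end Tensor

theorem Ideal.mem_span_singleton_pow_smul_top_iff {R : Type*} [CommRing R] {u x : R} {n : ℕ} :
    x ∈ Ideal.span {u} ^ n • (⊤ : Submodule R R) ↔ u ^ n ∣ x := by
  rw [smul_eq_mul, Ideal.mul_top, Ideal.span_singleton_pow, Ideal.mem_span_singleton]

theorem Ideal.iInf_sup_pow_eq_of_le_jacobson {A : Type*} [CommRing A] [IsNoetherianRing A]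
    {I : Ideal A} (hI : I ≤ Ideal.jacobson ⊥) (J : Ideal A) : ⨅ n, (J ⊔ I ^ n) = J := by
  refine le_antisymm (fun x hx ↦ ?_) (le_iInf fun _ ↦ le_sup_left)
  have hx' : Ideal.Quotient.mk J x ∈ (⨅ n, I ^ n • ⊤ : Submodule A (A ⧸ J)) := by
    refine Submodule.mem_iInf _ |>.mpr fun n ↦ ?_
    obtain ⟨j, hj, y, hy, rfl⟩ := Submodule.mem_sup.mp (Submodule.mem_iInf _ |>.mp hx n)
    rw [map_add, Ideal.Quotient.eq_zero_iff_mem.mpr hj, zero_add, ← Ideal.Quotient.algebraMap_eq,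
      Algebra.algebraMap_eq_smul_one]
    exact Submodule.smul_mem_smul hy Submodule.mem_top
  rwa [Ideal.iInf_pow_smul_eq_bot_of_le_jacobson _ hI, Submodule.mem_bot,
    Ideal.Quotient.eq_zero_iff_mem] at hx'

namespace PowerSeries

variable {R : Type*} [CommRing R]

theorem span_X_le_jacobson_bot : Ideal.span {X} ≤ Ideal.jacobson (⊥ : Ideal R⟦X⟧) :=
  (Ideal.span_singleton_le_iff_mem _).mpr <|
    Ideal.mem_jacobson_bot.mpr fun _ ↦ isUnit_iff_constantCoeff.mpr (by simp)

theorem eval_trunc_eq_sum_range (u : R) (n : ℕ) (f : R⟦X⟧) :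
    (trunc n f).eval u = ∑ i ∈ Finset.range n, coeff i f * u ^ i :=
  eval₂_trunc_eq_sum_range u (RingHom.id R) n f

theorem eval_trunc_succ_C_sub_X_mul (u : R) (g : R⟦X⟧) (n : ℕ) :
    (trunc (n + 1) ((C u - X) * g)).eval u = u ^ (n + 1) * coeff n g := by
  induction n with
  | zero => simp [trunc_one_left, sub_mul]
  | succ n ih =>
    rw [eval_trunc_eq_sum_range, Finset.sum_range_succ, ← eval_trunc_eq_sum_range, ih, sub_mul,
      map_sub, coeff_C_mul, coeff_succ_X_mul]
    ring

theorem mem_span_C_sub_X_sup_span_X_pow {u : R} {f : R⟦X⟧} {n : ℕ}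
    (h : u ^ n ∣ (trunc n f).eval u) : f ∈ Ideal.span {C u - X} ⊔ Ideal.span {X ^ n} := by
  obtain ⟨c, hc⟩ := h
  have htrunc : C u - X ∣ (trunc n f : R⟦X⟧) - C ((trunc n f).eval u) := by
    rw [← neg_sub, neg_dvd]
    simpa using map_dvd Polynomial.coeToPowerSeries.ringHom
      (Polynomial.X_sub_C_dvd_sub_C_eval (a := u))
  obtain ⟨p, hp⟩ := htrunc.add (dvd_mul_of_dvd_left (sub_dvd_pow_sub_pow (C u) X n) (C c))
  refine Submodule.mem_sup.mpr ⟨(C u - X) * p,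
    Ideal.mul_mem_right _ _ (Ideal.mem_span_singleton_self _),
    X ^ n * (mk (fun i ↦ coeff (i + n) f) + C c),
    Ideal.mul_mem_right _ _ (Ideal.mem_span_singleton_self _), ?_⟩
  rw [← hp, hc, map_mul, map_pow]
  conv_rhs => rw [eq_X_pow_mul_shift_add_trunc n f]
  ring

noncomputable def evalAdicCompletion (u : R) : R⟦X⟧ →ₗ[R] AdicCompletion (Ideal.span {u}) R :=
  AdicCompletion.lift _ (fun n ↦ (Submodule.mkQ _) ∘ₗ Polynomial.leval u ∘ₗ trunc n)
    fun {m n} hmn ↦ by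
      ext f
      change Submodule.Quotient.mk ((trunc n f).eval u) =
        Submodule.Quotient.mk ((trunc m f).eval u)
      have : Polynomial.X ^ m ∣ trunc n f - trunc m f :=
        Polynomial.X_pow_dvd_iff.mpr fun d hd ↦ by simp [coeff_trunc, hd, hd.trans_le hmn]
      rw [Submodule.Quotient.eq, Ideal.mem_span_singleton_pow_smul_top_iff]
      simpa using Polynomial.eval_dvd (x := u) this

theorem evalAdicCompletion_val (u : R) (f : R⟦X⟧) (n : ℕ) :
    (evalAdicCompletion u f).val n = Submodule.Quotient.mk ((trunc n f).eval u) :=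
  rfl

theorem evalAdicCompletion_surjective (u : R) : Function.Surjective (evalAdicCompletion u) := by
  intro x
  induction x using AdicCompletion.induction_on with | h a =>
  have hdvd (k : ℕ) : u ^ k ∣ a (k + 1) - a k := by
    rw [← Ideal.mem_span_singleton_pow_smul_top_iff, ← SModEq.sub_mem]
    exact ((AdicCompletion.isAdicCauchy_iff _ _ _).mp a.property k).symm
  choose s hs using hdvd
  have heval (k : ℕ) : (trunc (k + 1) (C (a 0) + mk s)).eval u = a (k + 1) := by
    rw [map_add, trunc_C, Polynomial.eval_add, Polynomial.eval_C, eval_trunc_eq_sum_range]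
    simp_rw [coeff_mk, mul_comm (s _), ← hs, Finset.sum_range_sub]
    ring
  refine ⟨C (a 0) + mk s, AdicCompletion.ext fun n ↦ ?_⟩
  rw [evalAdicCompletion_val]
  change _ = Submodule.Quotient.mk (a n)
  rw [Submodule.Quotient.eq, Ideal.mem_span_singleton_pow_smul_top_iff]
  cases n with
  | zero => simp
  | succ n => rw [heval, sub_self]; exact dvd_zero _

variable [IsNoetherianRing R]

theorem ker_evalAdicCompletion (u : R) :
    LinearMap.ker (evalAdicCompletion u) = (Ideal.span {C u - X}).restrictScalars R := by
  ext f
  simp only [LinearMap.mem_ker, Submodule.restrictScalars_mem]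
  constructor
  · intro hf
    have hdvd (n : ℕ) : u ^ n ∣ (trunc n f).eval u := by
      rw [← Ideal.mem_span_singleton_pow_smul_top_iff, ← Submodule.Quotient.mk_eq_zero,
        ← evalAdicCompletion_val, hf, AdicCompletion.val_zero_apply]
    rw [← Ideal.iInf_sup_pow_eq_of_le_jacobson span_X_le_jacobson_bot (Ideal.span {C u - X})]
    exact Submodule.mem_iInf _ |>.mpr fun n ↦ by
      simpa [Ideal.span_singleton_pow] using mem_span_C_sub_X_sup_span_X_pow (hdvd n)
  · intro hf
    obtain ⟨g, rfl⟩ := Ideal.mem_span_singleton.mp hf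
    refine AdicCompletion.ext fun n ↦ ?_
    rw [evalAdicCompletion_val, AdicCompletion.val_zero_apply, Submodule.Quotient.mk_eq_zero,
      Ideal.mem_span_singleton_pow_smul_top_iff]
    cases n with
    | zero => simp
    | succ n => exact ⟨_, eval_trunc_succ_C_sub_X_mul u g n⟩

noncomputable def quotientSpanCSubXEquivAdicCompletion (u : R) :
    (R⟦X⟧ ⧸ Ideal.span {C u - X}) ≃ₗ[R] AdicCompletion (Ideal.span {u}) R :=
  (Submodule.Quotient.restrictScalarsEquiv R _).symm ≪≫ₗ
    Submodule.quotEquivOfEq _ _ (ker_evalAdicCompletion u).symm ≪≫ₗ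
    (evalAdicCompletion u).quotKerEquivOfSurjective (evalAdicCompletion_surjective u)

instance flat_quotient_span_C_sub_X (u : R) : Module.Flat R (R⟦X⟧ ⧸ Ideal.span {C u - X}) :=
  .of_linearEquiv (quotientSpanCSubXEquivAdicCompletion u)

theorem isSMulRegular_C_sub_X {u : R} (hu : u ∈ Ideal.jacobson ⊥) :
    IsSMulRegular R⟦X⟧ (C u - X) := by
  refine isSMulRegular_iff_right_eq_zero_of_smul.mpr fun g hg ↦ ext fun n ↦ ?_
  have hshift (k : ℕ) : coeff k g = u * coeff (k + 1) g := by
    have := congrArg (coeff (k + 1)) hg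
    rw [smul_eq_mul, sub_mul, map_sub, coeff_C_mul, coeff_succ_X_mul, map_zero] at this
    linear_combination -this
  have hpow (k : ℕ) : coeff n g = u ^ k * coeff (n + k) g := by
    induction k with
    | zero => simp
    | succ k ih => rw [ih, hshift, pow_succ, mul_assoc, add_assoc]
  have : coeff n g ∈ (⨅ k, Ideal.span {u} ^ k • ⊤ : Submodule R R) :=
    Submodule.mem_iInf _ |>.mpr fun k ↦
      Ideal.mem_span_singleton_pow_smul_top_iff.mpr (Dvd.intro _ (hpow k).symm)
  rwa [Ideal.iInf_pow_smul_eq_bot_of_le_jacobson _ ((Ideal.span_singleton_le_iff_mem _).mpr hu)]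
    at this

end PowerSeries

theorem flat_quotient_powerSeries_tensor_of_mem_jacobson_general
    {R₀ : Type*} [CommRing R₀] [IsNoetherianRing R₀]
    (u : R₀) (hu : ∀ m : Ideal R₀, m.IsMaximal → u ∈ m)
    (N : Type*) [AddCommGroup N] [Module R₀ N] [Module.Flat R₀ N] :
    IsSMulRegular (PowerSeries R₀ ⊗[R₀] N) (PowerSeries.C u - PowerSeries.X) ∧
    Module.Flat R₀
      ((PowerSeries R₀ ⊗[R₀] N) ⧸
        (Ideal.span {PowerSeries.C u - PowerSeries.X} •
          (⊤ : Submodule (PowerSeries R₀) (PowerSeries R₀ ⊗[R₀] N)))) := by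
  have hu' : u ∈ Ideal.jacobson ⊥ := Ideal.mem_sInf.mpr fun m hm ↦ hu m hm.2
  exact ⟨(PowerSeries.isSMulRegular_C_sub_X hu').baseChange N,
    Module.Flat.tensorProduct_quotient_smul_top N _⟩

/-- **Flatness of `N[[T]]/(u − T)` over `R₀`.**
Let `R₀` be a Noetherian commutative ring, `u ∈ R₀` an element of the Jacobson radical
(i.e. contained in every maximal ideal), and `N` a finitely generated flat `R₀`-module.
Set `M := R₀[[T]] ⊗_{R₀} N`.  Then `u − T` is a non-zero-divisor on `M`, and the quotient
`M/(u − T)M` is a flat `R₀`-module. -/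
theorem flat_quotient_powerSeries_tensor_of_mem_jacobson
    {R₀ : Type*} [CommRing R₀] [IsNoetherianRing R₀]
    (u : R₀) (hu : ∀ m : Ideal R₀, m.IsMaximal → u ∈ m)
    (N : Type*) [AddCommGroup N] [Module R₀ N] [Module.Finite R₀ N] [Module.Flat R₀ N] :
    IsSMulRegular (PowerSeries R₀ ⊗[R₀] N) (PowerSeries.C u - PowerSeries.X) ∧
    Module.Flat R₀
      ((PowerSeries R₀ ⊗[R₀] N) ⧸
        (Ideal.span {PowerSeries.C u - PowerSeries.X} •
          (⊤ : Submodule (PowerSeries R₀) (PowerSeries R₀ ⊗[R₀] N)))) :=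
  flat_quotient_powerSeries_tensor_of_mem_jacobson_general u hu N
end

section
/- Let R₀ be a commutative ring, let u, p ∈ R₀ with p a non-zero-divisor on R₀, and let R be the localization of R₀ away from u (so R = R₀[1/u]). For j ≥ 1 set I_j := pʲR ∩ R₀, the preimage in R₀ of the ideal pʲR under the canonical map R₀ → R. If k₁ ∈ ℕ satisfies u^{k₁} I₁ ⊆ pR₀, then u^{j·k₁} I_j ⊆ pʲ R₀ for every j ≥ 1. In particular, the least integer k_j with u^{k_j} I_j ⊆ pʲR₀ satisfies k_j ≤ j·k₁. -/
/-- **Growth bound for the ideals `I_j = pʲR ∩ R₀`.**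
Let `R₀` be a commutative ring, `u, p ∈ R₀` with `p` a non-zero-divisor, and
`R = R₀[1/u]` the localization away from `u`.  For `j ≥ 1` let
`I_j := pʲR ∩ R₀` (the preimage of `pʲR` in `R₀`).  If `u^{k₁}·I₁ ⊆ pR₀`, then
`u^{j·k₁}·I_j ⊆ pʲR₀` for every `j ≥ 1`. -/
theorem pow_mul_mem_span_pow_of_mem_comap_span_pow
    {R₀ : Type*} [CommRing R₀] (u p : R₀) (hp : p ∈ nonZeroDivisors R₀) (k₁ : ℕ)
    (h₁ : ∀ x : R₀,
      algebraMap R₀ (Localization.Away u) x ∈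
          Ideal.span {algebraMap R₀ (Localization.Away u) p} →
        u ^ k₁ * x ∈ Ideal.span {p}) :
    ∀ j : ℕ, 1 ≤ j → ∀ x : R₀,
      algebraMap R₀ (Localization.Away u) x ∈
          Ideal.span {algebraMap R₀ (Localization.Away u) p ^ j} →
        u ^ (j * k₁) * x ∈ Ideal.span {p ^ j} := by
  set f := algebraMap R₀ (Localization.Away u) with hfdef
  intro j hj
  induction j with
  | zero => omega
  | succ j ih =>
    intro x hx
    rcases Nat.eq_zero_or_pos j with rfl | hj'
    · simpa using h₁ x (by simpa using hx)
    -- x ∈ I_{j+1} ⊆ I_j, apply induction hypothesis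
    have hxj : f x ∈ Ideal.span {f p ^ j} := by
      rw [Ideal.mem_span_singleton] at hx ⊢
      exact dvd_trans (pow_dvd_pow _ (Nat.le_succ j)) hx
    obtain ⟨y, hy⟩ := Ideal.mem_span_singleton.mp (ih hj' x hxj)
    -- hy : u ^ (j*k₁) * x = p ^ j * y
    rw [Ideal.mem_span_singleton] at hx
    obtain ⟨r, hr⟩ := hx
    obtain ⟨⟨a, s⟩, hs⟩ := IsLocalization.surj (Submonoid.powers u) r
    obtain ⟨m, hm⟩ := s.2
    have key : f (x * s) = f (p ^ (j + 1) * a) := by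
      simp only [map_mul, map_pow]
      rw [hr, mul_assoc]
      exact congrArg _ hs
    obtain ⟨c, hc⟩ := (IsLocalization.eq_iff_exists (Submonoid.powers u) _).mp key
    obtain ⟨n, hn⟩ := c.2
    have hn' : (u : R₀) ^ n = ↑c := hn
    have hm' : (u : R₀) ^ m = ↑s := hm
    -- hc : c * (x * s) = c * (p^(j+1) * a)
    have hcancel : p ^ j * (u ^ n * u ^ m * y) = p ^ j * (p * (u ^ n * u ^ (j * k₁) * a)) := by
      have e1 : u ^ n * u ^ m * (u ^ (j * k₁) * x) = u ^ (j * k₁) * (↑c * (x * ↑s)) := by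
        rw [hn', hm']; ring
      rw [hy, hc] at e1
      have e2 : u ^ n * u ^ m * (p ^ j * y) = u ^ (j * k₁) * (↑c * (p ^ (j + 1) * a)) := e1
      rw [← hn'] at e2
      calc p ^ j * (u ^ n * u ^ m * y) = u ^ n * u ^ m * (p ^ j * y) := by ring
        _ = u ^ (j * k₁) * (u ^ n * (p ^ (j + 1) * a)) := e2
        _ = p ^ j * (p * (u ^ n * u ^ (j * k₁) * a)) := by ring
    have hyeq : u ^ n * u ^ m * y = p * (u ^ n * u ^ (j * k₁) * a) :=
      (mul_cancel_left_mem_nonZeroDivisors (pow_mem hp j)).mp hcancel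
    -- hence f y ∈ pR
    have hfy : f y ∈ Ideal.span {f p} := by
      rw [Ideal.mem_span_singleton]
      have hu : IsUnit (f (u ^ n * u ^ m)) := by
        rw [← pow_add]
        exact IsLocalization.map_units (Localization.Away u)
          (⟨u ^ (n + m), n + m, rfl⟩ : Submonoid.powers u)
      have : f (u ^ n * u ^ m) * f y = f p * f (u ^ n * u ^ (j * k₁) * a) := by
        rw [← map_mul, ← map_mul, hyeq]
      exact (IsUnit.dvd_mul_left hu).mp ⟨f (u ^ n * u ^ (j * k₁) * a), this⟩
    obtain ⟨z, hz⟩ := Ideal.mem_span_singleton.mp (h₁ y hfy)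
    rw [Ideal.mem_span_singleton]
    refine ⟨z, ?_⟩
    have : u ^ ((j + 1) * k₁) * x = u ^ k₁ * (u ^ (j * k₁) * x) := by
      rw [← mul_assoc, ← pow_add]; ring_nf
    rw [this, hy, show u ^ k₁ * (p ^ j * y) = p ^ j * (u ^ k₁ * y) by ring, hz]
    ring
end

section
/- Let p be a prime and let C be an algebraically closed field of characteristic p equipped with a valuation v : C → ℝ≥0 with valuation ring O = {x ∈ C : v(x) ≤ 1}. Let π ∈ O be a nonzero element with v(π) < 1. Form the quotient rings A := O[Y]/(πY) and B := O[Y']/(π^p Y'), and let φ : A → B be the ring homomorphism determined by φ(a) = a^p for a ∈ O and φ(Y) = Y', and ι : A → B the ring homomorphism determined by ι(a) = a for a ∈ O and ι(Y) = π^{p−1}·Y'. Then the additive map φ − ι : A → B is surjective, and its kernel is exactly the image of the prime field 𝔽_p ⊆ O in A. In other words, the sequence 0 → 𝔽_p → A → B → 0, with second map φ − ι, is exact. -/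
/-- The ring homomorphism `O[Y]/(πY) → O[Y']/(π^p Y')` determined by `a ↦ a^p` on `O`
and `Y ↦ Y'` (a lift of Frobenius). -/
noncomputable def ASFrobeniusMap (p : ℕ) [Fact p.Prime]
    (O : Type*) [CommRing O] [CharP O p] (π : O) :
    (Polynomial O ⧸ Ideal.span {Polynomial.C π * Polynomial.X}) →+*
      (Polynomial O ⧸ Ideal.span {Polynomial.C (π ^ p) * Polynomial.X}) :=
  Ideal.Quotient.lift _
    ((Ideal.Quotient.mk (Ideal.span {Polynomial.C (π ^ p) * Polynomial.X})).comp
      (Polynomial.mapRingHom (frobenius O p)))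
    (by
      intro a ha
      rw [Ideal.mem_span_singleton] at ha
      obtain ⟨c, rfl⟩ := ha
      rw [map_mul]
      have h0 : ((Ideal.Quotient.mk (Ideal.span {Polynomial.C (π ^ p) * Polynomial.X})).comp
          (Polynomial.mapRingHom (frobenius O p))) (Polynomial.C π * Polynomial.X) = 0 := by
        rw [RingHom.comp_apply, Ideal.Quotient.eq_zero_iff_mem]
        have hmap : (Polynomial.mapRingHom (frobenius O p)) (Polynomial.C π * Polynomial.X)
            = Polynomial.C (π ^ p) * Polynomial.X := by
          simp [Polynomial.map_mul, Polynomial.map_C, Polynomial.map_X, frobenius_def]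
        rw [hmap]
        exact Ideal.subset_span rfl
      rw [h0, zero_mul])

/-- The ring homomorphism `O[Y]/(πY) → O[Y']/(π^p Y')` determined by `a ↦ a` on `O`
and `Y ↦ π^{p−1}·Y'`. -/
noncomputable def ASInclusionMap (p : ℕ) [Fact p.Prime]
    (O : Type*) [CommRing O] (π : O) :
    (Polynomial O ⧸ Ideal.span {Polynomial.C π * Polynomial.X}) →+*
      (Polynomial O ⧸ Ideal.span {Polynomial.C (π ^ p) * Polynomial.X}) :=
  Ideal.Quotient.lift _
    ((Ideal.Quotient.mk (Ideal.span {Polynomial.C (π ^ p) * Polynomial.X})).comp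
      (Polynomial.eval₂RingHom (Polynomial.C : O →+* Polynomial O)
        (Polynomial.C (π ^ (p - 1)) * Polynomial.X)))
    (by
      intro a ha
      rw [Ideal.mem_span_singleton] at ha
      obtain ⟨c, rfl⟩ := ha
      rw [map_mul]
      have h0 : ((Ideal.Quotient.mk (Ideal.span {Polynomial.C (π ^ p) * Polynomial.X})).comp
          (Polynomial.eval₂RingHom (Polynomial.C : O →+* Polynomial O)
            (Polynomial.C (π ^ (p - 1)) * Polynomial.X))) (Polynomial.C π * Polynomial.X)
          = 0 := by
        rw [RingHom.comp_apply, Ideal.Quotient.eq_zero_iff_mem]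
        have hπ : π * π ^ (p - 1) = π ^ p := by
          rw [← pow_succ']
          congr 1
          exact Nat.succ_pred_eq_of_pos (Fact.out : p.Prime).pos
        have hx : (Polynomial.eval₂RingHom (Polynomial.C : O →+* Polynomial O)
              (Polynomial.C (π ^ (p - 1)) * Polynomial.X)) (Polynomial.C π * Polynomial.X)
            = Polynomial.C (π ^ p) * Polynomial.X := by
          simp only [Polynomial.coe_eval₂RingHom, Polynomial.eval₂_mul, Polynomial.eval₂_C,
            Polynomial.eval₂_X]
          rw [← mul_assoc, ← Polynomial.C_mul, hπ]
        rw [hx]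
        exact Ideal.subset_span rfl
      rw [h0, zero_mul])

/-!
On a class `∑ aₙ Yⁿ`, the map `φ - ι` acts coefficientwise by `aₙ ↦ aₙ^p - π^{(p-1)n} aₙ`, and the
ideal `(π^p Y)` consists of the polynomials with vanishing constant term and all other coefficients
divisible by `π^p`. Surjectivity: each equation `a^p - c a = b` over `O` has a root in `C`, which lies
in `O` because `O` is integrally closed. Kernel: `a₀^p = a₀` forces `a₀ ∈ 𝔽_p`; for `n ≥ 1`, if
`v π < v aₙ` then `aₙ^p` dominates `π^{(p-1)n} aₙ`, so `π^p` cannot divide the difference. Hence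
`π ∣ aₙ` for `n ≥ 1`, i.e. the class is that of the constant `a₀`.
-/

section ArtinSchreier

open Polynomial

theorem mem_range_intCast_of_pow_eq_self {R : Type*} [CommRing R] [IsDomain R]
    (p : ℕ) [Fact p.Prime] [CharP R p] {x : R} (hx : x ^ p = x) :
    x ∈ Set.range (Int.cast : ℤ → R) := by
  let K := FractionRing R
  have hK : algebraMap R K x ∈ (⊥ : Subfield K) :=
    (Subfield.mem_bot_iff_pow_eq_self K p).2 (by rw [← map_pow, hx])
  obtain ⟨k, hk⟩ := (mem_bot_iff_intCast p K).1 hK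
  exact ⟨k, IsFractionRing.injective R K (by rw [map_intCast, hk])⟩

theorem Polynomial.C_mul_X_dvd_iff {R : Type*} [CommRing R] (a : R) (f : R[X]) :
    C a * X ∣ f ↔ f.coeff 0 = 0 ∧ ∀ n, a ∣ f.coeff (n + 1) := by
  constructor
  · rintro ⟨g, rfl⟩
    refine ⟨by simp, fun n => ⟨g.coeff n, ?_⟩⟩
    rw [mul_right_comm, coeff_mul_X, coeff_C_mul]
  · rintro ⟨h0, hdvd⟩
    obtain ⟨g, hg⟩ : C a ∣ f.divX := C_dvd_iff_dvd_coeff _ _ |>.2 fun n => by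
      rw [coeff_divX]; exact hdvd n
    refine ⟨g, ?_⟩
    rw [← divX_mul_X_add f, h0, C_0, add_zero, hg]
    ring

namespace Valuation

variable {K Γ₀ : Type*} [Field K] [LinearOrderedCommGroupWithZero Γ₀] (v : Valuation K Γ₀)

theorem exists_pow_sub_mul_eq [IsAlgClosed K] {n : ℕ} (hn : 1 < n) (c b : v.integer) :
    ∃ a : v.integer, a ^ n - c * a = b := by
  let q : v.integer[X] := X ^ n - C c * X - C b
  have hn0 : n ≠ 0 := by omega
  have hdeg : q.natDegree = n := by
    dsimp only [q]; compute_degree! <;> first | omega | simp [hn0, hn.ne']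
  have hmonic : q.Monic := by
    dsimp only [q]; monicity!; simp [hn0, hn.not_ge]
  obtain ⟨x, hx⟩ := IsAlgClosed.exists_root (q.map (algebraMap v.integer K)) <| by
    rw [hmonic.degree_map, degree_eq_natDegree hmonic.ne_zero, hdeg]
    exact_mod_cast hn0
  have hint : x ∈ v.integer := (integer.integers v).mem_of_integral
    ⟨q, hmonic, by rwa [IsRoot, eval_map] at hx⟩
  refine ⟨⟨x, hint⟩, Subtype.val_injective ?_⟩
  simpa [q, sub_eq_zero, Algebra.algebraMap_ofSubsemiring_apply] using hx

theorem dvd_of_pow_dvd_pow_sub_mul {n : ℕ} (hn : 1 < n) {π a c : v.integer}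
    (hc : π ^ (n - 1) ∣ c) (h : π ^ n ∣ a ^ n - a * c) : π ∣ a := by
  have hv := integer.integers v
  by_contra hπa
  have hlt : v π < v a := lt_of_not_ge fun hle => hπa (hv.dvd_of_le hle)
  have hsmall : v (a * c : K) < v (a ^ n : K) := calc
    v (a * c : K) ≤ v (a : K) * v (π : K) ^ (n - 1) := by
      rw [map_mul, ← map_pow]; gcongr; exact hv.le_of_dvd hc
    _ < v (a : K) * v (a : K) ^ (n - 1) := by
      gcongr
      exacts [zero_le.trans_lt hlt, zero_le, by omega]
    _ = v (a ^ n : K) := by rw [← pow_succ', map_pow, Nat.sub_add_cancel hn.le]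
  have hle : v (a ^ n - a * c : K) ≤ v (π ^ n : K) := by
    simpa [Algebra.algebraMap_ofSubsemiring_apply] using hv.le_of_dvd h
  rw [map_sub_eq_of_lt_left v hsmall, map_pow, map_pow] at hle
  exact hle.not_gt (pow_lt_pow_left₀ hlt zero_le (by omega))

end Valuation

variable {O : Type*} [CommRing O] (p : ℕ) [Fact p.Prime] (π : O)

theorem ASInclusionMap_mk (f : O[X]) :
    ASInclusionMap p O π (Ideal.Quotient.mk _ f) =
      Ideal.Quotient.mk _ (f.comp (C (π ^ (p - 1)) * X)) :=
  Ideal.Quotient.lift_mk _ _ _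

variable [CharP O p]

theorem ASFrobeniusMap_mk (f : O[X]) :
    ASFrobeniusMap p O π (Ideal.Quotient.mk _ f) = Ideal.Quotient.mk _ (f.map (frobenius O p)) :=
  Ideal.Quotient.lift_mk _ _ _

theorem coeff_map_frobenius_sub_comp_C_mul_X (f : O[X]) (d : O) (n : ℕ) :
    (f.map (frobenius O p) - f.comp (C d * X)).coeff n = f.coeff n ^ p - f.coeff n * d ^ n := by
  simp [frobenius_def]

theorem ASFrobeniusMap_mk_sub_ASInclusionMap_mk (f : O[X]) :
    ASFrobeniusMap p O π (Ideal.Quotient.mk _ f) - ASInclusionMap p O π (Ideal.Quotient.mk _ f) =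
      Ideal.Quotient.mk _ (f.map (frobenius O p) - f.comp (C (π ^ (p - 1)) * X)) := by
  rw [ASFrobeniusMap_mk, ASInclusionMap_mk, map_sub]

theorem ASFrobeniusMap_sub_ASInclusionMap_surjective (h : ∀ c b : O, ∃ a, a ^ p - c * a = b) :
    Function.Surjective fun x => ASFrobeniusMap p O π x - ASInclusionMap p O π x := by
  intro y
  obtain ⟨b, rfl⟩ := Ideal.Quotient.mk_surjective y
  induction b using Polynomial.induction_on' with
  | add f g hf hg =>
    obtain ⟨x, hx⟩ := hf
    obtain ⟨x', hx'⟩ := hg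
    refine ⟨x + x', ?_⟩
    simp only [map_add] at hx hx' ⊢
    rw [← hx, ← hx', add_sub_add_comm]
  | monomial n c =>
    obtain ⟨a, ha⟩ := h ((π ^ (p - 1)) ^ n) c
    refine ⟨Ideal.Quotient.mk _ (monomial n a), ?_⟩
    refine (ASFrobeniusMap_mk_sub_ASInclusionMap_mk p π _).trans (congrArg _ ?_)
    ext m
    rw [coeff_map_frobenius_sub_comp_C_mul_X, coeff_monomial, coeff_monomial]
    split_ifs with hnm
    · rw [← ha, hnm, mul_comm]
    · simp [zero_pow (Fact.out : p.Prime).ne_zero]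

theorem ASFrobeniusMap_eq_ASInclusionMap_iff [IsDomain O]
    (hdvd : ∀ (a : O) (n : ℕ), π ^ p ∣ a ^ p - a * (π ^ (p - 1)) ^ (n + 1) → π ∣ a)
    (x : O[X] ⧸ Ideal.span {C π * X}) :
    ASFrobeniusMap p O π x = ASInclusionMap p O π x ↔ x ∈ Set.range (Int.cast : ℤ → _) := by
  refine ⟨fun hx => ?_, by rintro ⟨k, rfl⟩; simp only [map_intCast]⟩
  obtain ⟨f, rfl⟩ := Ideal.Quotient.mk_surjective x
  rw [← sub_eq_zero, ASFrobeniusMap_mk_sub_ASInclusionMap_mk, Ideal.Quotient.eq_zero_iff_mem,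
    Ideal.mem_span_singleton, C_mul_X_dvd_iff] at hx
  simp only [coeff_map_frobenius_sub_comp_C_mul_X, pow_zero, mul_one, sub_eq_zero] at hx
  obtain ⟨hfix, hdvd'⟩ := hx
  obtain ⟨k, hk⟩ := mem_range_intCast_of_pow_eq_self p hfix
  refine ⟨k, Eq.symm ?_⟩
  have hkC : ((k : ℤ) : O[X] ⧸ Ideal.span {C π * X}) = Ideal.Quotient.mk _ (C (k : O)) := by
    simp
  rw [← sub_eq_zero, hkC, ← map_sub, Ideal.Quotient.eq_zero_iff_mem, Ideal.mem_span_singleton,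
    C_mul_X_dvd_iff]
  refine ⟨by rw [coeff_sub, coeff_C_zero, hk, sub_self], fun n => ?_⟩
  rw [coeff_sub, coeff_C_succ, sub_zero]
  exact hdvd _ n (hdvd' n)

end ArtinSchreier

theorem artin_schreier_sequence_for_valuation_ring_general
    (p : ℕ) [Fact p.Prime] (C : Type*) [Field C] [IsAlgClosed C] [CharP C p]
    (v : Valuation C NNReal) (π : v.integer) :
    (Function.Surjective
      (fun x : Polynomial v.integer ⧸ Ideal.span {Polynomial.C π * Polynomial.X} =>
        ASFrobeniusMap p v.integer π x - ASInclusionMap p v.integer π x)) ∧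
    ∀ x : Polynomial v.integer ⧸ Ideal.span {Polynomial.C π * Polynomial.X},
      ASFrobeniusMap p v.integer π x = ASInclusionMap p v.integer π x ↔
        x ∈ Set.range
          (Int.cast : ℤ → Polynomial v.integer ⧸ Ideal.span {Polynomial.C π * Polynomial.X}) := by
  have hp : 1 < p := (Fact.out : p.Prime).one_lt
  exact ⟨ASFrobeniusMap_sub_ASInclusionMap_surjective p π (v.exists_pow_sub_mul_eq hp),
    ASFrobeniusMap_eq_ASInclusionMap_iff p π fun _ n =>
      v.dvd_of_pow_dvd_pow_sub_mul hp (dvd_pow_self _ n.succ_ne_zero)⟩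

/-- **An Artin–Schreier style exact sequence.**
Let `p` be a prime and `C` an algebraically closed field of characteristic `p` with a
valuation `v : C → ℝ≥0`, with valuation ring `O = {x : v x ≤ 1}`.  Let `π ∈ O` be a
nonzero element with `v π < 1`.  Form `A := O[Y]/(πY)` and `B := O[Y']/(π^p Y')`, let
`φ : A → B` be the ring map with `φ(a) = a^p` for `a ∈ O` and `φ(Y) = Y'`, and
`ι : A → B` the ring map with `ι(a) = a` and `ι(Y) = π^{p−1}·Y'`.  Then `φ − ι : A → B`
is surjective, and its kernel is exactly the image of the prime field `𝔽_p ⊆ O` in `A`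
(i.e. the image of `ℤ` in `A`); in other words `0 → 𝔽_p → A → B → 0` is exact. -/
theorem artin_schreier_sequence_for_valuation_ring
    (p : ℕ) [Fact p.Prime] (C : Type*) [Field C] [IsAlgClosed C] [CharP C p]
    (v : Valuation C NNReal) (π : v.integer) (hπ0 : π ≠ 0) (hπ1 : v (π : C) < 1) :
    (Function.Surjective
      (fun x : Polynomial v.integer ⧸ Ideal.span {Polynomial.C π * Polynomial.X} =>
        ASFrobeniusMap p v.integer π x - ASInclusionMap p v.integer π x)) ∧
    ∀ x : Polynomial v.integer ⧸ Ideal.span {Polynomial.C π * Polynomial.X},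
      ASFrobeniusMap p v.integer π x = ASInclusionMap p v.integer π x ↔
        x ∈ Set.range
          (Int.cast : ℤ → Polynomial v.integer ⧸ Ideal.span {Polynomial.C π * Polynomial.X}) :=
  artin_schreier_sequence_for_valuation_ring_general p C v π
end

section
/- Let S be a commutative ring and u, w ∈ S such that for every n ≥ 1 the image of w in S/uⁿS is a non-zero-divisor. Let (c_j)_{j≥0} be a sequence of elements of S such that: (a) the c_j tend to 0 u-adically, i.e. for every n there exists J with c_j ∈ uⁿS for every j ≥ J; and (b) w·c_{j−1} − c_j ∈ uʲS for every j ≥ 1. Then c_{j−1} ∈ uʲS for every j ≥ 1. -/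
/-!
Fix `n = k + 1`. For `j ≥ k` the recurrence gives `w·c_j ≡ c_{j+1} (mod uⁿ)`, since
`uⁿ ∣ u^{j+1}`; as `w` is a non-zero-divisor modulo `uⁿ`, membership of `c_{j+1}` in `uⁿS`
descends to `c_j`. The sequence lies in `uⁿS` from some index on, so a downward induction
from there reaches `c_k`.
-/

open Filter

theorem Nat.forall_ge_of_eventually_of_succ_imp {P : ℕ → Prop} {m : ℕ}
    (hP : ∀ᶠ j in atTop, P j) (hstep : ∀ j ≥ m, P (j + 1) → P j) : ∀ j ≥ m, P j := by
  refine Nat.decreasing_induction_of_infinite (P := fun j ↦ m ≤ j → P j)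
    (fun j ih hj ↦ hstep j hj (ih (hj.trans j.le_succ))) ?_
  exact Nat.frequently_atTop_iff_infinite.1 (hP.mono fun j hj (_ : m ≤ j) ↦ hj).frequently

theorem Ideal.mem_of_mul_mem_of_mk_mem_nonZeroDivisors {S : Type*} [CommRing S] {I : Ideal S}
    {w x : S} (hw : Ideal.Quotient.mk I w ∈ nonZeroDivisors (S ⧸ I)) (h : w * x ∈ I) :
    x ∈ I := by
  rw [← Ideal.Quotient.eq_zero_iff_mem] at h ⊢
  exact mem_nonZeroDivisors_iff_left.1 hw _ (by rwa [← map_mul])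

theorem Ideal.forall_ge_mem_of_eventually_mem_of_mul_sub_mem {S : Type*} [CommRing S]
    {I : Ideal S} {w : S} (hw : Ideal.Quotient.mk I w ∈ nonZeroDivisors (S ⧸ I))
    {c : ℕ → S} {m : ℕ} (hc : ∀ᶠ j in atTop, c j ∈ I)
    (hrec : ∀ j ≥ m, w * c j - c (j + 1) ∈ I) : ∀ j ≥ m, c j ∈ I :=
  Nat.forall_ge_of_eventually_of_succ_imp hc fun j hj hsucc ↦
    Ideal.mem_of_mul_mem_of_mk_mem_nonZeroDivisors hw (by simpa using I.add_mem (hrec j hj) hsucc)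

/-- **Divisibility propagation along a `u`-adically null sequence.**
Let `S` be a commutative ring and `u, w ∈ S` such that for every `n ≥ 1` the image of
`w` in `S/uⁿS` is a non-zero-divisor.  Let `(c_j)` be a sequence in `S` tending to `0`
`u`-adically and satisfying `w·c_{j−1} − c_j ∈ uʲS` for every `j ≥ 1`.  Then
`c_{j−1} ∈ uʲS` for every `j ≥ 1` (stated below with the index shift `j = k + 1`). -/
theorem mem_span_pow_of_tendsto_zero_of_rec
    {S : Type*} [CommRing S] (u w : S)
    (hw : ∀ n : ℕ, 1 ≤ n →
      Ideal.Quotient.mk (Ideal.span {u ^ n}) w ∈ nonZeroDivisors (S ⧸ Ideal.span {u ^ n}))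
    (c : ℕ → S)
    (hc0 : ∀ n : ℕ, ∃ J : ℕ, ∀ j : ℕ, J ≤ j → c j ∈ Ideal.span {u ^ n})
    (hrec : ∀ k : ℕ, w * c k - c (k + 1) ∈ Ideal.span {u ^ (k + 1)}) :
    ∀ k : ℕ, c k ∈ Ideal.span {u ^ (k + 1)} := by
  intro k
  have hrec' : ∀ j ≥ k, w * c j - c (j + 1) ∈ Ideal.span {u ^ (k + 1)} := fun j hj ↦
    Ideal.span_singleton_le_span_singleton.2 (pow_dvd_pow u (by omega)) (hrec j)
  exact Ideal.forall_ge_mem_of_eventually_mem_of_mul_sub_mem (hw (k + 1) k.succ_pos)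
    (eventually_atTop.2 (hc0 (k + 1))) hrec' k le_rfl
end
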